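/- Suppose that V(r,u) > 0 for every valid ranking r ∈ 𝒮 and every u ∈ 𝒰, where 𝒮 is defined by upper-bound constraints only. Then any maxmin-fair distribution F over 𝒮 maximizes the Nash social welfare: for every distribution D over 𝒮, ∏_{u∈𝒰} F[u] ≥ ∏_{u∈𝒰} D[u]. -/

import Mathlib

open Finset

/-- `v` is strictly greater than `w` in the lexicographic order. -/
def lexGT {n : ℕ} (v w : Fin n → ℝ) : Prop :=
  ∃ i, w i < v i ∧ ∀ j < i, v j = w j

/-- `v` is greater than or equal to `w` in the lexicographic order. -/
def lexGE {n : ℕ} (v w : Fin n → ℝ) : Prop := v = w ∨ lexGT v w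

/-- The vector `v` rearranged in increasing order. -/
noncomputable def sortedVec {n : ℕ} (v : Fin n → ℝ) : Fin n → ℝ :=
  v ∘ Tuple.sort v

/-- A probability distribution supported on the valid rankings `Vld`. -/
def IsDistribOn {U : Type*} [Fintype U] [DecidableEq U]
    (Vld : (U ≃ Fin (Fintype.card U)) → Prop) (p : (U ≃ Fin (Fintype.card U)) → ℝ) : Prop :=
  (∀ r, 0 ≤ p r) ∧ (∑ r : U ≃ Fin (Fintype.card U), p r = 1) ∧ (∀ r, p r ≠ 0 → Vld r)

/-- Expected value `D[u] = E_{r∼p}[f(r(u)) - g(u)]` of individual `u` under distribution `p`. -/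
def EV {U : Type*} [Fintype U] [DecidableEq U] (f : Fin (Fintype.card U) → ℝ) (g : U → ℝ)
    (p : (U ≃ Fin (Fintype.card U)) → ℝ) (u : U) : ℝ :=
  ∑ r : U ≃ Fin (Fintype.card U), p r * (f (r u) - g u)

/-- The vector of expected values, sorted in increasing order. -/
noncomputable def scovR {U : Type*} [Fintype U] [DecidableEq U]
    (f : Fin (Fintype.card U) → ℝ) (g : U → ℝ) (p : (U ≃ Fin (Fintype.card U)) → ℝ) :
    Fin (Fintype.card U) → ℝ :=
  sortedVec (fun i => EV f g p ((Fintype.equivFin U).symm i))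

/-- `F` is a maxmin-fair distribution over the valid rankings `Vld`. -/
def MaxminFair {U : Type*} [Fintype U] [DecidableEq U]
    (Vld : (U ≃ Fin (Fintype.card U)) → Prop) (f : Fin (Fintype.card U) → ℝ) (g : U → ℝ)
    (F : (U ≃ Fin (Fintype.card U)) → ℝ) : Prop :=
  IsDistribOn Vld F ∧ ∀ D, IsDistribOn Vld D → lexGE (scovR f g F) (scovR f g D)

/-- A ranking is valid if, for every prefix length `i` and class `k`, the number of
individuals of class `k` in the top `i` positions is at most `ub i k`. -/
def ValidUB {U : Type*} [Fintype U] {t : ℕ} (c : U → Fin t)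
    (ub : Fin (Fintype.card U) → Fin t → ℕ) (r : U ≃ Fin (Fintype.card U)) : Prop :=
  ∀ i : Fin (Fintype.card U), ∀ k : Fin t,
    (Finset.univ.filter (fun u => c u = k ∧ r u ≤ i)).card ≤ ub i k


/-! Let `x = F[·]` and `μ = 1 / x`. Every ranking in the support of `F` maximizes the score
`∑ u, μ u * f (r u)` over the valid rankings: a valid transposition that lets a heavier
(poorer) individual overtake a lighter one would allow a Robin Hood transfer, contradicting
maxmin-fairness, and under upper-bound constraints an exchange argument shows that such local
optimality is global. Averaging over `F` gives `∑ u, D[u] / F[u] ≤ n` for every distribution `D`,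
and `log y ≤ y - 1` turns this into `∏ u, D[u] ≤ ∏ u, F[u]`. -/

section SortedVec

variable {n : ℕ}

theorem not_lexGE_of_lexGT {v w : Fin n → ℝ} (h : lexGT v w) : ¬ lexGE w v := by
  obtain ⟨i, hi, hbelow⟩ := h
  rintro (rfl | ⟨j, hj, hbelow'⟩)
  · exact lt_irrefl _ hi
  · rcases lt_trichotomy i j with hij | rfl | hji
    · exact (hbelow' i hij).not_lt hi
    · exact lt_asymm hi hj
    · exact (hbelow j hji).not_lt hj

theorem card_filter_sortedVec_le (v : Fin n → ℝ) (t : ℝ) :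
    #{i | sortedVec v i ≤ t} = #{i | v i ≤ t} :=
  card_equiv (Tuple.sort v) fun i => by rw [mem_filter, mem_filter]; simp [sortedVec]

theorem Monotone.le_iff_lt_card_filter_le {a : Fin n → ℝ} (ha : Monotone a) (i : Fin n)
    (t : ℝ) : a i ≤ t ↔ (i : ℕ) < #{j | a j ≤ t} := by
  constructor
  · intro h
    calc (i : ℕ) < #(Iic i) := by simp
      _ ≤ _ := card_le_card fun j hj => by
        simp only [mem_Iic, mem_filter, mem_univ, true_and] at hj ⊢
        exact (ha hj).trans h
  · intro h
    by_contra! hlt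
    have : #{j | a j ≤ t} ≤ #(Iio i) := card_le_card fun j hj => by
      simp only [mem_Iio, mem_filter, mem_univ, true_and] at hj ⊢
      by_contra! hij
      exact (hlt.trans_le (ha hij)).not_ge hj
    simp only [Fin.card_Iio] at this
    omega

/-- The sorted vectors agree up to the index `#{i | w i ≤ t}`, where `sortedVec v` is still
`≤ t` but `sortedVec w` already exceeds `t`. -/
theorem lexGT_sortedVec_of_card_filter_le {v w : Fin n → ℝ} {t : ℝ}
    (hbelow : ∀ s < t, #{i | w i ≤ s} = #{i | v i ≤ s})
    (hat : #{i | w i ≤ t} < #{i | v i ≤ t}) :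
    lexGT (sortedVec w) (sortedVec v) := by
  have hv (i : Fin n) (s : ℝ) : sortedVec v i ≤ s ↔ (i : ℕ) < #{j | v j ≤ s} := by
    rw [← card_filter_sortedVec_le]; exact (Tuple.monotone_sort v).le_iff_lt_card_filter_le i s
  have hw (i : Fin n) (s : ℝ) : sortedVec w i ≤ s ↔ (i : ℕ) < #{j | w j ≤ s} := by
    rw [← card_filter_sortedVec_le]; exact (Tuple.monotone_sort w).le_iff_lt_card_filter_le i s
  have hlt : #{i | w i ≤ t} < n := hat.trans_le (card_le_univ _ |>.trans_eq (Fintype.card_fin n))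
  refine ⟨⟨_, hlt⟩, ?_, fun j hj => ?_⟩
  · exact ((hv _ t).2 hat).trans_lt (not_le.1 fun h => ((hw _ t).1 h).false)
  · have hvj : sortedVec v j ≤ t := (hv j t).2 ((Fin.lt_def.1 hj).trans hat)
    have hwj : sortedVec w j ≤ t := (hw j t).2 (Fin.lt_def.1 hj)
    refine le_antisymm (not_lt.1 fun h => ?_) (not_lt.1 fun h => ?_)
    · exact h.not_ge ((hw j _).2 (by rw [hbelow _ (h.trans_le hwj)]; exact (hv j _).1 le_rfl))
    · exact h.not_ge ((hv j _).2 (by rw [← hbelow _ (h.trans_le hvj)]; exact (hw j _).1 le_rfl))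

theorem lexGT_sortedVec_comp_of_transfer {ι : Type*} [Fintype ι] (e : ι ≃ Fin n)
    {X Y : ι → ℝ} {p q : ι} {δ : ℝ} (hδ : 0 < δ) (hpq : X p + δ ≤ X q - δ)
    (hYp : Y p = X p + δ) (hYq : Y q = X q - δ) (hY : ∀ u, u ≠ p → u ≠ q → Y u = X u) :
    lexGT (sortedVec (Y ∘ e.symm)) (sortedVec (X ∘ e.symm)) := by
  have hcount (Z : ι → ℝ) (s : ℝ) : #{i | (Z ∘ e.symm) i ≤ s} = #{u | Z u ≤ s} :=
    card_equiv e.symm fun i => by simp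
  have hiff (s : ℝ) (hs : s ≤ X p) (u : ι) (hu : u ≠ p) : Y u ≤ s ↔ X u ≤ s := by
    rcases eq_or_ne u q with rfl | huq
    · constructor <;> intro <;> linarith
    · rw [hY u hu huq]
  refine lexGT_sortedVec_of_card_filter_le (t := X p) (fun s hs => ?_) ?_ <;>
    rw [hcount, hcount]
  · congr 1
    ext u
    rcases eq_or_ne u p with rfl | hup
    · simp only [mem_filter, mem_univ, true_and]
      constructor <;> intro <;> linarith
    · simpa using hiff s hs.le u hup
  · refine card_lt_card ((ssubset_iff_of_subset fun u hu => ?_).2 ⟨p, by simp, by simp [hYp, hδ]⟩)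
    simp only [mem_filter, mem_univ, true_and] at hu ⊢
    rcases eq_or_ne u p with rfl | hup
    · linarith
    · exact (hiff _ le_rfl u hup).1 hu

end SortedVec

section Distributions

variable {U : Type*} [Fintype U] [DecidableEq U]
  {Vld : (U ≃ Fin (Fintype.card U)) → Prop} {f : Fin (Fintype.card U) → ℝ} {g : U → ℝ}

theorem IsDistribOn.sum_mul_le {p : (U ≃ Fin (Fintype.card U)) → ℝ} (hp : IsDistribOn Vld p)
    {b : (U ≃ Fin (Fintype.card U)) → ℝ} {C : ℝ} (h : ∀ r, Vld r → b r ≤ C) :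
    ∑ r, p r * b r ≤ C :=
  calc ∑ r, p r * b r ≤ ∑ r, p r * C := sum_le_sum fun r _ => by
        rcases eq_or_ne (p r) 0 with h0 | h0
        · simp [h0]
        · exact mul_le_mul_of_nonneg_left (h r (hp.2.2 r h0)) (hp.1 r)
    _ = C := by rw [← sum_mul, hp.2.1, one_mul]

theorem IsDistribOn.le_sum_mul {p : (U ≃ Fin (Fintype.card U)) → ℝ} (hp : IsDistribOn Vld p)
    {b : (U ≃ Fin (Fintype.card U)) → ℝ} {C : ℝ} (h : ∀ r, p r ≠ 0 → C ≤ b r) :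
    C ≤ ∑ r, p r * b r :=
  calc C = ∑ r, p r * C := by rw [← sum_mul, hp.2.1, one_mul]
    _ ≤ ∑ r, p r * b r := sum_le_sum fun r _ => by
        rcases eq_or_ne (p r) 0 with h0 | h0
        · simp [h0]
        · exact mul_le_mul_of_nonneg_left (h r h0) (hp.1 r)

theorem EV_pos (hpos : ∀ r, Vld r → ∀ u, 0 < f (r u) - g u)
    {p : (U ≃ Fin (Fintype.card U)) → ℝ} (hp : IsDistribOn Vld p) (u : U) :
    0 < EV f g p u := by
  obtain ⟨r₀, -, hr₀⟩ := exists_ne_zero_of_sum_ne_zero (hp.2.1.symm ▸ one_ne_zero)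
  have hterm (r) (hr : p r ≠ 0) : 0 < p r * (f (r u) - g u) :=
    mul_pos ((hp.1 r).lt_of_ne' hr) (hpos r (hp.2.2 r hr) u)
  refine sum_pos' (fun r _ => ?_) ⟨r₀, mem_univ _, hterm r₀ hr₀⟩
  rcases eq_or_ne (p r) 0 with h0 | h0
  · simp [h0]
  · exact (hterm r h0).le

theorem sum_mul_EV (w : U → ℝ) (p : (U ≃ Fin (Fintype.card U)) → ℝ) :
    ∑ u, w u * EV f g p u = ∑ r, p r * ∑ u, w u * (f (r u) - g u) := by
  simp only [EV, mul_sum]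
  rw [sum_comm]
  exact sum_congr rfl fun _ _ => sum_congr rfl fun _ _ => by ring

def shiftMass {α : Type*} [DecidableEq α] (F : α → ℝ) (r₀ r₂ : α) (η : ℝ) : α → ℝ :=
  fun r => F r + η * ((if r = r₂ then 1 else 0) - if r = r₀ then 1 else 0)

theorem EV_shiftMass (F : (U ≃ Fin (Fintype.card U)) → ℝ) (r₀ r₂ : U ≃ Fin (Fintype.card U))
    (η : ℝ) (u : U) :
    EV f g (shiftMass F r₀ r₂ η) u = EV f g F u + η * (f (r₂ u) - f (r₀ u)) := by
  simp only [EV, shiftMass, add_mul, sum_add_distrib, mul_assoc, ← mul_sum, sub_mul,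
    sum_sub_distrib, ite_mul, one_mul, zero_mul, sum_ite_eq', mem_univ, if_true]
  ring

theorem IsDistribOn.shiftMass {F : (U ≃ Fin (Fintype.card U)) → ℝ} (hF : IsDistribOn Vld F)
    {r₀ r₂ : U ≃ Fin (Fintype.card U)} (hr₂ : Vld r₂) {η : ℝ} (hη : 0 ≤ η) (hηF : η ≤ F r₀) :
    IsDistribOn Vld (shiftMass F r₀ r₂ η) := by
  refine ⟨fun r => ?_, ?_, fun r hr => ?_⟩
  · have := hF.1 r
    unfold _root_.shiftMass
    split_ifs <;> subst_vars <;> linarith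
  · simp [_root_.shiftMass, sum_add_distrib, ← mul_sum, hF.2.1]
  · by_cases h₂ : r = r₂
    · exact h₂ ▸ hr₂
    refine hF.2.2 r fun h0 => hr ?_
    by_cases h₀ : r = r₀
    · subst h₀
      simp only [_root_.shiftMass, h₂, if_false, if_true]
      linarith
    · simp [_root_.shiftMass, h₂, h₀, h0]

/-- Otherwise shifting a little mass from `r₀` to `r₂` is a Robin Hood transfer from `q` to `p`,
which improves the sorted expected values. -/
theorem MaxminFair.EV_le_of_exchange {F : (U ≃ Fin (Fintype.card U)) → ℝ}
    (hF : MaxminFair Vld f g F)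
    {r₀ r₂ : U ≃ Fin (Fintype.card U)} (hr₀ : F r₀ ≠ 0) (hr₂ : Vld r₂) {p q : U}
    (hgain : 0 < f (r₂ p) - f (r₀ p)) (hloss : f (r₂ q) - f (r₀ q) = -(f (r₂ p) - f (r₀ p)))
    (hother : ∀ u, u ≠ p → u ≠ q → f (r₂ u) = f (r₀ u)) :
    EV f g F q ≤ EV f g F p := by
  by_contra! hlt
  set Δ := f (r₂ p) - f (r₀ p)
  set η := min (F r₀) ((EV f g F q - EV f g F p) / (2 * Δ))
  have hη : 0 < η := lt_min ((hF.1.1 r₀).lt_of_ne' hr₀) (by apply div_pos <;> linarith)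
  have hηΔ : η * (2 * Δ) ≤ EV f g F q - EV f g F p :=
    (le_div_iff₀ (by positivity)).1 (min_le_right _ _)
  have hlex := lexGT_sortedVec_comp_of_transfer (Fintype.equivFin U) (p := p) (q := q)
    (X := EV f g F) (Y := EV f g (shiftMass F r₀ r₂ η)) (mul_pos hη hgain) (by linarith)
    (EV_shiftMass F r₀ r₂ η p) (by rw [EV_shiftMass, hloss]; ring)
    (fun u hup huq => by rw [EV_shiftMass, hother u hup huq, sub_self, mul_zero, add_zero])
  exact not_lexGE_of_lexGT hlex (hF.2 _ (hF.1.shiftMass hr₂ hη.le (min_le_left _ _)))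

end Distributions

section Swaps

variable {U : Type*} [Fintype U] [DecidableEq U] {t : ℕ} {c : U → Fin t}
  {ub : Fin (Fintype.card U) → Fin t → ℕ}

theorem validUB_swap_of_class_eq {r : U ≃ Fin (Fintype.card U)} (hr : ValidUB c ub r)
    {p q : U} (h : c p = c q) : ValidUB c ub ((Equiv.swap p q).trans r) := by
  intro i k
  refine le_of_eq_of_le (card_equiv (Equiv.swap p q) fun u => ?_) (hr i k)
  have hc : c (Equiv.swap p q u) = c u := by
    rw [Equiv.swap_apply_def]; split_ifs <;> simp_all
  rw [mem_filter, mem_filter]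
  simp [hc]

theorem exists_saturated_of_not_validUB_swap {r : U ≃ Fin (Fintype.card U)}
    (hr : ValidUB c ub r) {p q : U} (hlt : r p < r q)
    (hinv : ¬ ValidUB c ub ((Equiv.swap p q).trans r)) :
    ∃ i, r p ≤ i ∧ i < r q ∧ ub i (c q) ≤ #{u | c u = c q ∧ r u ≤ i} := by
  by_contra! hunsat
  refine hinv fun i k => ?_
  have hmem (u : U) (hu : r (Equiv.swap p q u) ≤ i) : u = q ∨ r u ≤ i := by
    rcases eq_or_ne u q with rfl | huq
    · exact .inl rfl
    rcases eq_or_ne u p with rfl | hup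
    · rw [Equiv.swap_apply_left] at hu; exact .inr (hlt.le.trans hu)
    · rw [Equiv.swap_apply_of_ne_of_ne hup huq] at hu; exact .inr hu
  by_cases hsat : c q = k ∧ r p ≤ i ∧ i < r q
  · obtain ⟨rfl, hpi, hiq⟩ := hsat
    calc _ ≤ #(insert q ({u | c u = c q ∧ r u ≤ i} : Finset U)) := card_le_card fun u hu => by
          rw [mem_filter] at hu
          simp only [mem_filter, mem_univ, true_and, Equiv.trans_apply, mem_insert] at hu ⊢
          exact (hmem u hu.2).imp_right (⟨hu.1, ·⟩)
      _ ≤ _ := (card_insert_le _ _).trans (hunsat i hpi hiq)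
  · refine (card_le_card fun u hu => ?_).trans (hr i k)
    rw [mem_filter] at hu
    simp only [mem_filter, mem_univ, true_and, Equiv.trans_apply] at hu ⊢
    refine ⟨hu.1, (hmem u hu.2).elim (fun huq => ?_) id⟩
    subst huq
    rw [Equiv.swap_apply_right] at hu
    exact not_lt.1 fun hiq => hsat ⟨hu.1, hu.2, hiq⟩

/-- The class of `q` is saturated at some prefix `i` between the two positions, so a valid `s`
that puts `q` into that prefix must push another member `q'` of the class out of it. -/
theorem exists_partner_of_not_validUB_swap {r s : U ≃ Fin (Fintype.card U)}
    (hr : ValidUB c ub r) (hs : ValidUB c ub s) {p q : U} (hlt : r p < r q)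
    (hinv : ¬ ValidUB c ub ((Equiv.swap p q).trans r)) (hsq : s q ≤ r p) :
    ∃ i q', c q' = c q ∧ r p ≤ i ∧ i < r q ∧ r q' ≤ i ∧ i < s q' := by
  obtain ⟨i, hpi, hiq, hsat⟩ := exists_saturated_of_not_validUB_swap hr hlt hinv
  obtain ⟨q', hq'r, hq's⟩ :
      ∃ q' ∈ ({u | c u = c q ∧ r u ≤ i} : Finset U),
        q' ∉ ({u | c u = c q ∧ s u ≤ i} : Finset U) := by
    by_contra! hsub
    have hss : ({u | c u = c q ∧ r u ≤ i} : Finset U) ⊂ ({u | c u = c q ∧ s u ≤ i} : Finset U) :=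
      (ssubset_iff_of_subset hsub).2 ⟨q, by simp [hsq.trans hpi], by simp [hiq]⟩
    exact (card_lt_card hss).not_ge ((hs i (c q)).trans hsat)
  simp only [mem_filter, mem_univ, true_and, not_and, not_le] at hq'r hq's
  exact ⟨i, q', hq'r.1, hpi, hiq, hq'r.2, hq's hq'r.1⟩

end Swaps

section Exchange

variable {U : Type*} [Fintype U] {n : ℕ}

theorem exists_lt_of_ne {r s : U ≃ Fin n} (h : s ≠ r) :
    ∃ a b, r a = s b ∧ r a < s a ∧ s b < r b := by
  have hne : ∃ u, s u ≠ r u := by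
    by_contra! h'
    exact h (Equiv.ext h')
  obtain ⟨a, ha, hmin⟩ := exists_min_image ({u | s u ≠ r u} : Finset U) r
    (filter_nonempty_iff.2 (by simpa using hne))
  simp only [mem_filter, mem_univ, true_and] at ha hmin
  have hagree (u : U) (hu : r u < r a) : s u = r u := by_contra fun hne => (hmin u hne).not_gt hu
  set b := s.symm (r a)
  have hsb : s b = r a := s.apply_symm_apply _
  refine ⟨a, b, hsb.symm, lt_of_le_of_ne (not_lt.1 fun hsa => ?_) (Ne.symm ha), ?_⟩
  · have := hagree (r.symm (s a)) (by rwa [r.apply_symm_apply])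
    rw [r.apply_symm_apply] at this
    exact ha (r.symm_apply_eq.1 (s.injective this))
  · rw [hsb]
    refine lt_of_le_of_ne (not_lt.1 fun hrb => ?_) fun hrb => ?_
    · exact hrb.ne' (hsb ▸ hagree b hrb)
    · exact ha (r.injective hrb ▸ hsb)

variable [DecidableEq U]

theorem sum_swap_trans_add {M : Type*} [AddCommMonoid M] (T : U → Fin n → M) (s : U ≃ Fin n)
    {z w : U} (hzw : z ≠ w) :
    ∑ u, T u ((Equiv.swap z w).trans s u) + (T z (s z) + T w (s w)) =
      ∑ u, T u (s u) + (T z (s w) + T w (s z)) := by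
  have hcompl : ∑ u ∈ {z, w}ᶜ, T u ((Equiv.swap z w).trans s u) = ∑ u ∈ {z, w}ᶜ, T u (s u) :=
    sum_congr rfl fun u hu => by
      rw [mem_compl, mem_insert, mem_singleton, not_or] at hu
      rw [Equiv.trans_apply, Equiv.swap_apply_of_ne_of_ne hu.1 hu.2]
  rw [← sum_add_sum_compl {z, w}, ← sum_add_sum_compl {z, w} fun u => T u (s u),
    sum_pair hzw, sum_pair hzw, hcompl]
  simp only [Equiv.trans_apply, Equiv.swap_apply_left, Equiv.swap_apply_right]
  abel

theorem sum_mul_le_sum_mul_swap_trans {μ : U → ℝ} {φ : Fin n → ℝ} (hφ : Antitone φ)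
    (s : U ≃ Fin n) {z w : U} (hμ : μ w ≤ μ z) (hs : s w ≤ s z) :
    ∑ u, μ u * φ (s u) ≤ ∑ u, μ u * φ ((Equiv.swap z w).trans s u) := by
  rcases eq_or_ne z w with rfl | hzw
  · simp
  have := sum_swap_trans_add (fun u j => μ u * φ j) s hzw
  nlinarith [mul_nonneg (sub_nonneg.2 hμ) (sub_nonneg.2 (hφ hs))]

theorem le_of_sum_mul_le_sum_mul_swap_trans {μ : U → ℝ} {r : U ≃ Fin n} {p q : U}
    (hqp : r q < r p)
    (h : ∑ u, μ u * (r u : ℝ) ≤ ∑ u, μ u * ((Equiv.swap p q).trans r u : ℝ)) : μ p ≤ μ q := by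
  have := sum_swap_trans_add (fun u j => μ u * (j : ℝ)) r (ne_of_apply_ne r hqp.ne')
  have hqp' : ((r q : ℕ) : ℝ) < (r p : ℕ) := by exact_mod_cast hqp
  nlinarith

def displacement (r s : U ≃ Fin n) : ℕ := ∑ u, Nat.dist (r u) (s u)

theorem displacement_swap_trans_lt {r s : U ≃ Fin n} {z w : U} (hzw : z ≠ w)
    (h : Nat.dist (r z) (s w) + Nat.dist (r w) (s z) <
      Nat.dist (r z) (s z) + Nat.dist (r w) (s w)) :
    displacement r ((Equiv.swap z w).trans s) < displacement r s := by
  have := sum_swap_trans_add (fun u j => Nat.dist (r u) j) s hzw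
  unfold displacement
  omega

end Exchange

section ExchangeUB

variable {U : Type*} [Fintype U] [DecidableEq U] {t : ℕ} {c : U → Fin t}
  {ub : Fin (Fintype.card U) → Fin t → ℕ} {μ : U → ℝ}

def SwapOptimal {n : ℕ} (Vld : (U ≃ Fin n) → Prop) (μ : U → ℝ) (r : U ≃ Fin n) : Prop :=
  ∀ p q, Vld ((Equiv.swap p q).trans r) → r q < r p → μ p ≤ μ q

/-- Take the first position where `r` and `s` differ, held by `a` in `r` and by `b` in `s`.
Either `a` can move up to it in `s`, or a saturated prefix of the class of `a` (in `s`) or of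
`b` (in `r`) yields a same-class partner to exchange with. -/
theorem exists_swap_trans_of_swapOptimal {r s : U ≃ Fin (Fintype.card U)}
    (hr : ValidUB c ub r) (hopt : SwapOptimal (ValidUB c ub) μ r) (hs : ValidUB c ub s)
    (hsr : s ≠ r) :
    ∃ z w, ValidUB c ub ((Equiv.swap z w).trans s) ∧ μ w ≤ μ z ∧ s w ≤ s z ∧
      displacement r ((Equiv.swap z w).trans s) < displacement r s := by
  obtain ⟨a, b, hab, has, hbr⟩ := exists_lt_of_ne hsr
  by_cases hVr : ValidUB c ub ((Equiv.swap a b).trans r)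
  · by_cases hVs : ValidUB c ub ((Equiv.swap b a).trans s)
    · refine ⟨a, b, Equiv.swap_comm a b ▸ hVs,
        hopt b a (Equiv.swap_comm a b ▸ hVr) (by omega), by omega,
        displacement_swap_trans_lt (by rintro rfl; omega) ?_⟩
      simp only [Nat.dist]; omega
    · obtain ⟨i, a', hca', hbi, hia, ha'i, hia'⟩ :=
        exists_partner_of_not_validUB_swap hs hr (by omega) hVs (by omega)
      refine ⟨a, a', validUB_swap_of_class_eq hs hca'.symm,
        hopt a' a (validUB_swap_of_class_eq hr hca') (by omega), by omega,
        displacement_swap_trans_lt (by rintro rfl; omega) ?_⟩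
      simp only [Nat.dist]; omega
  · obtain ⟨i, b', hcb', hai, hib, hb'i, hib'⟩ :=
      exists_partner_of_not_validUB_swap hr hs (by omega) hVr (by omega)
    refine ⟨b', b, validUB_swap_of_class_eq hs hcb',
      hopt b b' (validUB_swap_of_class_eq hr hcb'.symm) (by omega), by omega,
      displacement_swap_trans_lt (by rintro rfl; omega) ?_⟩
    simp only [Nat.dist]; omega

theorem SwapOptimal.sum_mul_le {φ : Fin (Fintype.card U) → ℝ} (hφ : Antitone φ)
    {r : U ≃ Fin (Fintype.card U)} (hr : ValidUB c ub r) (hopt : SwapOptimal (ValidUB c ub) μ r)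
    {s : U ≃ Fin (Fintype.card U)} (hs : ValidUB c ub s) :
    ∑ u, μ u * φ (s u) ≤ ∑ u, μ u * φ (r u) := by
  induction h : displacement r s using Nat.strong_induction_on generalizing s with
  | _ d ih =>
    rcases eq_or_ne s r with rfl | hsr
    · rfl
    obtain ⟨z, w, hv, hμ, hzw, hlt⟩ := exists_swap_trans_of_swapOptimal hr hopt hs hsr
    exact (sum_mul_le_sum_mul_swap_trans hφ s hμ hzw).trans (ih _ (h ▸ hlt) hv rfl)

end ExchangeUB

section SupportRankings

variable {U : Type*} [Fintype U] [DecidableEq U] {t : ℕ} {c : U → Fin t}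
  {ub : Fin (Fintype.card U) → Fin t → ℕ} {f : Fin (Fintype.card U) → ℝ} {g : U → ℝ}
  {F : (U ≃ Fin (Fintype.card U)) → ℝ}

/-- Among the valid rankings with the same values as `r₀`, one minimizing `∑ u, μ u * r u` is
swap-optimal: ties are settled by that choice, strict gains are excluded by maxmin-fairness. -/
theorem MaxminFair.sum_inv_mul_le_of_ne_zero (hf : Antitone f)
    (hF : MaxminFair (ValidUB c ub) f g F) (hx : ∀ u, 0 < EV f g F u)
    {r₀ : U ≃ Fin (Fintype.card U)} (hr₀ : F r₀ ≠ 0) {s : U ≃ Fin (Fintype.card U)}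
    (hs : ValidUB c ub s) :
    ∑ u, (EV f g F u)⁻¹ * f (s u) ≤ ∑ u, (EV f g F u)⁻¹ * f (r₀ u) := by
  classical
  set μ := fun u => (EV f g F u)⁻¹
  obtain ⟨r, hr, hmin⟩ :=
    exists_min_image ({ρ | ValidUB c ub ρ ∧ ∀ u, f (ρ u) = f (r₀ u)} : Finset _)
      (fun ρ => ∑ u, μ u * (ρ u : ℝ)) ⟨r₀, by simp [hF.1.2.2 r₀ hr₀]⟩
  simp only [mem_filter, mem_univ, true_and, and_imp] at hr hmin
  have hopt : SwapOptimal (ValidUB c ub) μ r := by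
    intro p q hv hqp
    rcases (hf hqp.le).eq_or_lt with htie | hgain
    · refine le_of_sum_mul_le_sum_mul_swap_trans hqp (hmin _ hv fun u => ?_)
      rw [Equiv.trans_apply, ← hr.2 u, Equiv.swap_apply_def]
      split_ifs <;> subst_vars <;> simp [htie]
    · refine inv_anti₀ (hx q)
        (hF.EV_le_of_exchange hr₀ hv (p := p) (q := q) ?_ ?_ fun u hup huq => ?_)
      · simp [← hr.2, hgain]
      · simp [← hr.2]
      · simp [← hr.2, Equiv.swap_apply_of_ne_of_ne hup huq]
  calc ∑ u, μ u * f (s u) ≤ ∑ u, μ u * f (r u) := hopt.sum_mul_le hf hr.1 hs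
    _ = ∑ u, μ u * f (r₀ u) := by simp only [hr.2]

theorem MaxminFair.sum_inv_mul_le_card (hf : Antitone f)
    (hF : MaxminFair (ValidUB c ub) f g F) (hx : ∀ u, 0 < EV f g F u)
    {s : U ≃ Fin (Fintype.card U)} (hs : ValidUB c ub s) :
    ∑ u, (EV f g F u)⁻¹ * (f (s u) - g u) ≤ Fintype.card U :=
  calc ∑ u, (EV f g F u)⁻¹ * (f (s u) - g u)
      ≤ ∑ r, F r * ∑ u, (EV f g F u)⁻¹ * (f (r u) - g u) := hF.1.le_sum_mul fun r hr => by
        simp only [mul_sub, sum_sub_distrib]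
        linarith [hF.sum_inv_mul_le_of_ne_zero hf hx hr hs]
    _ = ∑ u, (EV f g F u)⁻¹ * EV f g F u := (sum_mul_EV _ F).symm
    _ = Fintype.card U := by simp [inv_mul_cancel₀ (hx _).ne']

end SupportRankings

theorem prod_le_prod_of_sum_div_le_card {ι : Type*} [Fintype ι] {x y : ι → ℝ}
    (hx : ∀ i, 0 < x i) (hy : ∀ i, 0 < y i) (h : ∑ i, y i / x i ≤ Fintype.card ι) :
    ∏ i, y i ≤ ∏ i, x i := by
  have hlog : ∑ i, Real.log (y i / x i) ≤ 0 :=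
    calc ∑ i, Real.log (y i / x i) ≤ ∑ i, (y i / x i - 1) :=
          sum_le_sum fun i _ => Real.log_le_sub_one_of_pos (div_pos (hy i) (hx i))
      _ ≤ 0 := by simp only [sum_sub_distrib, sum_const, card_univ, nsmul_eq_mul, mul_one]; linarith
  rw [← Real.log_prod fun i _ => (div_pos (hy i) (hx i)).ne',
    Real.log_nonpos_iff (prod_nonneg fun i _ => (div_pos (hy i) (hx i)).le), prod_div_distrib,
    div_le_one (prod_pos fun i _ => hx i)] at hlog
  exact hlog

theorem maxmin_fair_max_nash_welfare_general {U : Type*} [Fintype U] [DecidableEq U] {t : ℕ}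
    (c : U → Fin t) (ub : Fin (Fintype.card U) → Fin t → ℕ)
    (f : Fin (Fintype.card U) → ℝ) (hf : Antitone f) (g : U → ℝ)
    (hpos : ∀ r : U ≃ Fin (Fintype.card U), ValidUB c ub r → ∀ u : U, 0 < f (r u) - g u)
    (F : (U ≃ Fin (Fintype.card U)) → ℝ) (hF : MaxminFair (ValidUB c ub) f g F) :
    ∀ D, IsDistribOn (ValidUB c ub) D →
      ∏ u : U, EV f g D u ≤ ∏ u : U, EV f g F u := by
  intro D hD
  have hx := EV_pos hpos hF.1
  refine prod_le_prod_of_sum_div_le_card hx (EV_pos hpos hD) ?_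
  calc ∑ u, EV f g D u / EV f g F u = ∑ u, (EV f g F u)⁻¹ * EV f g D u := by
        simp only [div_eq_inv_mul]
    _ = ∑ r, D r * ∑ u, (EV f g F u)⁻¹ * (f (r u) - g u) := sum_mul_EV _ D
    _ ≤ Fintype.card U := hD.sum_mul_le fun s hs => hF.sum_inv_mul_le_card hf hx hs

/-- If all values `V(r,u) = f(r(u)) - g(u)` are positive on valid rankings, then with only
upper-bound constraints any maxmin-fair distribution maximizes the Nash social welfare. -/
theorem maxmin_fair_max_nash_welfare {U : Type*} [Fintype U] [DecidableEq U] {t : ℕ}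
    (c : U → Fin t) (ub : Fin (Fintype.card U) → Fin t → ℕ)
    (f : Fin (Fintype.card U) → ℝ) (hf : Antitone f) (g : U → ℝ)
    (hS : ∃ r, ValidUB c ub r)
    (hpos : ∀ r : U ≃ Fin (Fintype.card U), ValidUB c ub r → ∀ u : U, 0 < f (r u) - g u)
    (F : (U ≃ Fin (Fintype.card U)) → ℝ) (hF : MaxminFair (ValidUB c ub) f g F) :
    ∀ D, IsDistribOn (ValidUB c ub) D →
      ∏ u : U, EV f g D u ≤ ∏ u : U, EV f g F u :=
  maxmin_fair_max_nash_welfare_general c ub f hf g hpos F hF
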